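/- (At most |V| Bellman–Ford iterations are needed for the widest path, since only simple paths matter.) For all vertices u, v : V, the supremum over all walks of any length of the minimum edge capacity along the walk equals the supremum restricted to walks of length at most Fintype.card V - 1: ⨆_{k : ℕ} ⨆ over all walks p of length k from u to v of ⨅_{i=0}^{k-1} w (p i) (p (i+1)) = ⨆_{k ∈ Finset.range (Fintype.card V)} ⨆ over all walks p of length k from u to v of ⨅_{i=0}^{k-1} w (p i) (p (i+1)), where the empty infimum for k = 0 is ∞. -/

import Mathlib

open ENNReal

/-!
Any walk visiting some vertex twice can be shortcut by deleting the closed subwalk between the two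
visits; the result has the same endpoints and uses only edges of the original walk, so its
bottleneck capacity is at least as large. Iterating, every walk is dominated by an injective walk,
and an injective walk on `V` has length less than `Fintype.card V`.
-/

namespace WidestPath

variable {V α : Type*} [CompleteLattice α]

def bottleneck (w : V → V → α) {k : ℕ} (p : Fin (k + 1) → V) : α :=
  ⨅ i : Fin k, w (p i.castSucc) (p i.succ)

lemma bottleneck_le_of_forall_edge (w : V → V → α) {k l : ℕ} {p : Fin (k + 1) → V}
    {q : Fin (l + 1) → V}
    (h : ∀ m : Fin l, ∃ e : Fin k, q m.castSucc = p e.castSucc ∧ q m.succ = p e.succ) :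
    bottleneck w p ≤ bottleneck w q := by
  refine le_iInf fun m => ?_
  obtain ⟨e, h₁, h₂⟩ := h m
  rw [h₁, h₂]
  exact iInf_le _ e

lemma exists_shortcut_of_eq (w : V → V → α) {k : ℕ} (p : Fin (k + 1) → V) {i j : Fin (k + 1)}
    (hij : i < j) (hp : p i = p j) :
    ∃ l < k, ∃ q : Fin (l + 1) → V, q 0 = p 0 ∧ q (Fin.last l) = p (Fin.last k) ∧
      bottleneck w p ≤ bottleneck w q := by
  have hij' : (i : ℕ) < j := hij
  generalize hd : (j : ℕ) - i = d
  let q : Fin (k - d + 1) → V := fun n =>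
    p ⟨if (n : ℕ) ≤ i then n else n + d, by split_ifs <;> omega⟩
  have hq_le (n : Fin (k - d + 1)) (hn : (n : ℕ) ≤ i) : q n = p ⟨n, by omega⟩ :=
    congrArg p (Fin.ext (if_pos hn))
  have hq_ge (n : Fin (k - d + 1)) (hn : (i : ℕ) ≤ n) : q n = p ⟨n + d, by omega⟩ := by
    by_cases hni : (n : ℕ) ≤ i
    · calc q n = p i := (hq_le n hni).trans (congrArg p (Fin.ext (by simp; omega)))
        _ = p j := hp
        _ = p ⟨n + d, _⟩ := congrArg p (Fin.ext (by simp; omega))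
    · exact congrArg p (Fin.ext (if_neg hni))
  refine ⟨k - d, by omega, q, ?_, ?_, bottleneck_le_of_forall_edge w fun m => ?_⟩
  · exact hq_le 0 (Nat.zero_le _)
  · exact (hq_ge _ (by simp; omega)).trans (congrArg p (Fin.ext (by simp; omega)))
  · by_cases hm : (m : ℕ) < i
    · exact ⟨⟨m, by omega⟩, hq_le _ hm.le, hq_le m.succ (by simpa using hm)⟩
    · exact ⟨⟨m + d, by omega⟩, hq_ge _ (not_lt.1 hm),
        (hq_ge _ (by simp; omega)).trans (congrArg p (Fin.ext (by simp; omega)))⟩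

lemma exists_shortcut_of_not_injective (w : V → V → α) {k : ℕ} (p : Fin (k + 1) → V)
    (hp : ¬ Function.Injective p) :
    ∃ l < k, ∃ q : Fin (l + 1) → V, q 0 = p 0 ∧ q (Fin.last l) = p (Fin.last k) ∧
      bottleneck w p ≤ bottleneck w q := by
  obtain ⟨i, j, hpij, hij⟩ := Function.not_injective_iff.1 hp
  rcases hij.lt_or_gt with hlt | hgt
  · exact exists_shortcut_of_eq w p hlt hpij
  · exact exists_shortcut_of_eq w p hgt hpij.symm

lemma exists_bottleneck_le_of_length_lt_card [Fintype V] (w : V → V → α) {k : ℕ}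
    (p : Fin (k + 1) → V) :
    ∃ l < Fintype.card V, ∃ q : Fin (l + 1) → V, q 0 = p 0 ∧ q (Fin.last l) = p (Fin.last k) ∧
      bottleneck w p ≤ bottleneck w q := by
  induction k using Nat.strong_induction_on with
  | _ k ih =>
    by_cases hp : Function.Injective p
    · have hk := Fintype.card_le_of_injective p hp
      rw [Fintype.card_fin] at hk
      exact ⟨k, hk, p, rfl, rfl, le_rfl⟩
    · obtain ⟨l, hl, q, hq₀, hqₗ, hpq⟩ := exists_shortcut_of_not_injective w p hp
      obtain ⟨m, hm, r, hr₀, hrₘ, hqr⟩ := ih l hl q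
      exact ⟨m, hm, r, hr₀.trans hq₀, hrₘ.trans hqₗ, hpq.trans hqr⟩

end WidestPath

theorem widest_path_restricted_to_simple_paths {V : Type*} [Fintype V]
    (w : Matrix V V ℝ≥0∞) (u v : V) :
    (⨆ k : ℕ, ⨆ p : {p : Fin (k + 1) → V // p 0 = u ∧ p (Fin.last k) = v},
        ⨅ i : Fin k, w (p.1 i.castSucc) (p.1 i.succ)) =
      ⨆ k ∈ Finset.range (Fintype.card V),
        ⨆ p : {p : Fin (k + 1) → V // p 0 = u ∧ p (Fin.last k) = v},
          ⨅ i : Fin k, w (p.1 i.castSucc) (p.1 i.succ) := by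
  refine le_antisymm (iSup₂_le fun k p => ?_) (iSup₂_le fun k _ => le_iSup_of_le k le_rfl)
  obtain ⟨l, hl, q, hq₀, hqₗ, hpq⟩ := WidestPath.exists_bottleneck_le_of_length_lt_card w p.1
  exact le_iSup₂_of_le l (Finset.mem_range.2 hl)
    (le_iSup_of_le ⟨q, hq₀.trans p.2.1, hqₗ.trans p.2.2⟩ hpq)
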